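/- arXiv:0812.2941 — 2 statements merged into one kernel-verified Lean document; each statement's English description precedes it below -/
import Mathlib

section
/- Let T and B be n×n real matrices with T primitive and T ≥ B ≥ 0 entrywise, and let λ be the spectral radius of T. If some complex eigenvalue β of B satisfies |β| = λ, then T = B. -/
/-!
Let `x` be an eigenvector of `B` for `β`, let `y = |x|` entrywise and `λ = specRad T`. The
triangle inequality gives `λ y ≤ B y ≤ T y`. Whenever `μ w ≤ T w` for a nonzero `w ≥ 0`,
iterating gives `μ ^ m ‖w‖ ≤ ‖T ^ m‖ ‖w‖`, so Gelfand's formula yields `μ ≤ λ`. If `T y ≠ λ y`,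
the nonnegative slack `T y - λ y` becomes strictly positive under `T ^ k`, so `w = T ^ k y`
satisfies `(λ + ε) w ≤ T w` for some `ε > 0`, contradicting that bound. Hence `T y = λ y`;
applying `T ^ k` once more shows `y > 0`, and then `B y = T y` together with `B ≤ T` forces
`B = T`.
-/

open Matrix

/-- A real square matrix is primitive if it is entrywise nonnegative and some
positive power of it has all entries strictly positive. -/
def Matrix.IsPrimitive' {n : ℕ} (T : Matrix (Fin n) (Fin n) ℝ) : Prop :=
  (∀ i j, 0 ≤ T i j) ∧ ∃ k : ℕ, 0 < k ∧ ∀ i j, 0 < (T ^ k) i j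

/-- The spectral radius of a real square matrix: the maximum of the absolute
values of its complex eigenvalues. -/
noncomputable def specRad {n : ℕ} (A : Matrix (Fin n) (Fin n) ℝ) : ℝ :=
  sSup {x : ℝ | ∃ β : ℂ, β ∈ spectrum ℂ (A.map (Complex.ofReal)) ∧ x = ‖β‖}

open Filter Topology

theorem exists_pos_smul_le {ι : Type*} [Finite ι] (w : ι → ℝ) {v : ι → ℝ}
    (hv : ∀ i, 0 < v i) : ∃ ε : ℝ, 0 < ε ∧ ε • w ≤ v := by
  have hsmall : ∀ i, ∀ᶠ ε in 𝓝[>] (0 : ℝ), ε * w i < v i := fun i =>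
    nhdsWithin_le_nhds <| (continuous_id.mul continuous_const).tendsto' 0 0 (zero_mul _)
      |>.eventually (gt_mem_nhds (hv i))
  obtain ⟨ε, hε, hεw⟩ := (eventually_mem_nhdsWithin.and (eventually_all.2 hsmall)).exists
  exact ⟨ε, hε, fun i => (hεw i).le⟩

theorem ofReal_le_spectralRadius_of_pow_le_norm_pow {A : Type*} [NormedRing A]
    [NormedAlgebra ℂ A] [CompleteSpace A] {a : A} {μ : ℝ} (h : ∀ m : ℕ, μ ^ m ≤ ‖a ^ m‖) :
    ENNReal.ofReal μ ≤ spectralRadius ℂ a := by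
  rcases lt_or_ge μ 0 with hμ | hμ
  · simp [ENNReal.ofReal_of_nonpos hμ.le]
  refine ge_of_tendsto (spectrum.pow_norm_pow_one_div_tendsto_nhds_spectralRadius a) ?_
  filter_upwards [eventually_ne_atTop 0] with m hm
  refine ENNReal.ofReal_le_ofReal ?_
  calc μ = (μ ^ m) ^ (1 / m : ℝ) := by rw [one_div, Real.pow_rpow_inv_natCast hμ hm]
    _ ≤ ‖a ^ m‖ ^ (1 / m : ℝ) := by gcongr; exact h m

theorem pi_norm_le_pi_norm_of_nonneg_of_le {ι : Type*} [Fintype ι] {u v : ι → ℝ} (hu : 0 ≤ u)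
    (h : u ≤ v) : ‖u‖ ≤ ‖v‖ :=
  (pi_norm_le_iff_of_nonneg (norm_nonneg v)).2 fun i => by
    rw [Real.norm_of_nonneg (hu i)]
    exact (h i).trans ((le_abs_self _).trans (norm_le_pi_norm v i))

namespace Matrix

variable {ι : Type*} [Fintype ι]

theorem mulVec_le_mulVec_of_nonneg_left {A : Matrix ι ι ℝ} (hA : ∀ i j, 0 ≤ A i j)
    {u v : ι → ℝ} (huv : u ≤ v) : A *ᵥ u ≤ A *ᵥ v := fun i =>
  dotProduct_le_dotProduct_of_nonneg_left huv (hA i)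

theorem mulVec_le_mulVec_of_nonneg_right {A B : Matrix ι ι ℝ} (hAB : ∀ i j, A i j ≤ B i j)
    {v : ι → ℝ} (hv : 0 ≤ v) : A *ᵥ v ≤ B *ᵥ v := fun i =>
  dotProduct_le_dotProduct_of_nonneg_right (hAB i) hv

theorem mulVec_pos {P : Matrix ι ι ℝ} (hP : ∀ i j, 0 < P i j) {v : ι → ℝ} (hv0 : 0 ≤ v)
    (hv : v ≠ 0) (i : ι) : 0 < (P *ᵥ v) i := by
  obtain ⟨j, hj⟩ := Function.ne_iff.1 hv
  exact Finset.sum_pos' (fun j _ => mul_nonneg (hP i j).le (hv0 j))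
    ⟨j, Finset.mem_univ j, mul_pos (hP i j) ((hv0 j).lt_of_ne' hj)⟩

theorem eq_of_le_of_mulVec_eq {A B : Matrix ι ι ℝ} (hAB : ∀ i j, A i j ≤ B i j)
    {v : ι → ℝ} (hv : ∀ i, 0 < v i) (h : A *ᵥ v = B *ᵥ v) : A = B := by
  ext i j
  have hsum : ∑ j, (B i j - A i j) * v j = 0 := by
    simp only [sub_mul, Finset.sum_sub_distrib]
    exact sub_eq_zero.2 (congrFun h i).symm
  have hterm := (Finset.sum_eq_zero_iff_of_nonneg fun j _ =>
    mul_nonneg (sub_nonneg.2 (hAB i j)) (hv j).le).1 hsum j (Finset.mem_univ j)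
  linarith [(mul_eq_zero.1 hterm).resolve_right (hv j).ne']

theorem norm_map_ofReal_mulVec_le {A : Matrix ι ι ℝ} (hA : ∀ i j, 0 ≤ A i j) (x : ι → ℂ)
    (i : ι) : ‖(A.map ((↑) : ℝ → ℂ) *ᵥ x) i‖ ≤ (A *ᵥ fun j => ‖x j‖) i := by
  refine (norm_sum_le _ _).trans_eq (Finset.sum_congr rfl fun j _ => ?_)
  change ‖(A i j : ℂ) * x j‖ = A i j * ‖x j‖
  rw [norm_mul, Complex.norm_real, Real.norm_of_nonneg (hA i j)]

section DecidableEq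

variable [DecidableEq ι]

theorem exists_mulVec_eq_smul_of_mem_spectrum {K : Type*} [Field K]
    {A : Matrix ι ι K} {β : K} (hβ : β ∈ spectrum K A) : ∃ x ≠ 0, A *ᵥ x = β • x := by
  rw [← spectrum_toLin', ← Module.End.hasEigenvalue_iff_mem_spectrum] at hβ
  obtain ⟨x, hx, hx0⟩ := hβ.exists_hasEigenvector
  exact ⟨x, hx0, Module.End.mem_eigenspace_iff.1 hx⟩

theorem pow_mulVec_eq_pow_smul {R : Type*} [CommSemiring R] {A : Matrix ι ι R} {c : R}
    {y : ι → R} (h : A *ᵥ y = c • y) (m : ℕ) : (A ^ m) *ᵥ y = c ^ m • y := by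
  induction m with
  | zero => simp
  | succ m ih => rw [pow_succ', ← mulVec_mulVec, ih, mulVec_smul, h, smul_smul, pow_succ]

theorem pow_smul_le_pow_mulVec {A : Matrix ι ι ℝ} (hA : ∀ i j, 0 ≤ A i j) {μ : ℝ} (hμ : 0 ≤ μ)
    {w : ι → ℝ} (h : μ • w ≤ A *ᵥ w) (m : ℕ) : μ ^ m • w ≤ (A ^ m) *ᵥ w := by
  induction m with
  | zero => simp
  | succ m ih =>
    calc μ ^ (m + 1) • w = μ ^ m • (μ • w) := by rw [pow_succ, mul_smul]
      _ ≤ μ ^ m • (A *ᵥ w) := smul_le_smul_of_nonneg_left h (pow_nonneg hμ m)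
      _ = A *ᵥ (μ ^ m • w) := (mulVec_smul A _ w).symm
      _ ≤ A *ᵥ ((A ^ m) *ᵥ w) := mulVec_le_mulVec_of_nonneg_left hA ih
      _ = (A ^ (m + 1)) *ᵥ w := by rw [mulVec_mulVec, pow_succ']

end DecidableEq

end Matrix

theorem specRad_nonneg {n : ℕ} (A : Matrix (Fin n) (Fin n) ℝ) : 0 ≤ specRad A :=
  Real.sSup_nonneg fun _ ⟨β, _, hx⟩ => hx ▸ norm_nonneg β

theorem spectralRadius_map_ofReal_le_specRad {n : ℕ} (A : Matrix (Fin n) (Fin n) ℝ) :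
    spectralRadius ℂ (A.map ((↑) : ℝ → ℂ)) ≤ ENNReal.ofReal (specRad A) := by
  have hbdd :
      BddAbove {x : ℝ | ∃ β : ℂ, β ∈ spectrum ℂ (A.map (Complex.ofReal)) ∧ x = ‖β‖} := by
    refine ((Matrix.finite_spectrum (A.map Complex.ofReal)).image (‖·‖)).bddAbove.mono ?_
    rintro _ ⟨β, hβ, rfl⟩
    exact ⟨β, hβ, rfl⟩
  refine iSup₂_le fun β hβ => ?_
  rw [← enorm_eq_nnnorm, ← ofReal_norm]
  exact ENNReal.ofReal_le_ofReal (le_csSup hbdd ⟨β, hβ, rfl⟩)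

section linftyOpNorm

attribute [local instance] Matrix.linftyOpNormedAddCommGroup Matrix.linftyOpNormedRing
  Matrix.linftyOpNormedAlgebra

theorem Matrix.linfty_opNorm_map_ofReal {ι : Type*} [Fintype ι] (A : Matrix ι ι ℝ) :
    ‖A.map ((↑) : ℝ → ℂ)‖ = ‖A‖ := by
  simp [linfty_opNorm_def]

theorem le_specRad_of_smul_le_mulVec {n : ℕ} {T : Matrix (Fin n) (Fin n) ℝ}
    (hT : ∀ i j, 0 ≤ T i j) {w : Fin n → ℝ} (hw0 : 0 ≤ w) (hw : w ≠ 0) {μ : ℝ}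
    (h : μ • w ≤ T *ᵥ w) : μ ≤ specRad T := by
  rcases lt_or_ge μ 0 with hμ | hμ
  · exact hμ.le.trans (specRad_nonneg T)
  have hpow (m : ℕ) : μ ^ m ≤ ‖(T.map ((↑) : ℝ → ℂ)) ^ m‖ := by
    have hmap : (T.map ((↑) : ℝ → ℂ)) ^ m = (T ^ m).map ((↑) : ℝ → ℂ) :=
      (Matrix.map_pow T Complex.ofRealHom m).symm
    rw [hmap, linfty_opNorm_map_ofReal]
    refine le_of_mul_le_mul_right ?_ (norm_pos_iff.2 hw)
    calc μ ^ m * ‖w‖ = ‖μ ^ m • w‖ := by rw [norm_smul, Real.norm_of_nonneg (pow_nonneg hμ m)]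
      _ ≤ ‖(T ^ m) *ᵥ w‖ := pi_norm_le_pi_norm_of_nonneg_of_le
          (smul_nonneg (pow_nonneg hμ m) hw0) (pow_smul_le_pow_mulVec hT hμ h m)
      _ ≤ ‖T ^ m‖ * ‖w‖ := linfty_opNorm_mulVec _ _
  exact (ENNReal.ofReal_le_ofReal_iff (specRad_nonneg T)).1 <|
    (ofReal_le_spectralRadius_of_pow_le_norm_pow hpow).trans
      (spectralRadius_map_ofReal_le_specRad T)

end linftyOpNorm

namespace Matrix.IsPrimitive'

variable {n : ℕ} {T : Matrix (Fin n) (Fin n) ℝ} {y : Fin n → ℝ}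

theorem mulVec_eq_specRad_smul (hT : T.IsPrimitive') (hy0 : 0 ≤ y) (hy : y ≠ 0)
    (h : specRad T • y ≤ T *ᵥ y) : T *ᵥ y = specRad T • y := by
  obtain ⟨hT0, k, -, hTk⟩ := hT
  by_contra hne
  set u := T *ᵥ y - specRad T • y
  set w := (T ^ k) *ᵥ y
  obtain ⟨ε, hε, hεw⟩ :=
    exists_pos_smul_le w (mulVec_pos hTk (sub_nonneg.2 h) (sub_ne_zero.2 hne))
  have hw0 : 0 ≤ w := fun i => (mulVec_pos hTk hy0 hy i).le
  have hw : w ≠ 0 := by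
    obtain ⟨j, -⟩ := Function.ne_iff.1 hy
    exact Function.ne_iff.2 ⟨j, (mulVec_pos hTk hy0 hy j).ne'⟩
  have hTw : T *ᵥ w = specRad T • w + (T ^ k) *ᵥ u := by
    rw [mulVec_mulVec, ← pow_succ', pow_succ, ← mulVec_mulVec, ← mulVec_smul, ← mulVec_add,
      add_sub_cancel]
  have hbound : specRad T + ε ≤ specRad T := le_specRad_of_smul_le_mulVec hT0 hw0 hw <| by
    rw [add_smul, hTw]
    exact add_le_add le_rfl hεw
  linarith

theorem pos_of_mulVec_eq_smul (hT : T.IsPrimitive') (hy0 : 0 ≤ y) (hy : y ≠ 0) {c : ℝ}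
    (h : T *ᵥ y = c • y) (i : Fin n) : 0 < y i := by
  obtain ⟨-, k, -, hTk⟩ := hT
  have hpos := mulVec_pos hTk hy0 hy i
  rw [pow_mulVec_eq_pow_smul h, Pi.smul_apply, smul_eq_mul] at hpos
  exact (hy0 i).lt_of_ne fun h0 => by simp [← h0] at hpos

end Matrix.IsPrimitive'

theorem dominated_matrix_eigenvalue_eq_spectral_radius_imp_eq {n : ℕ}
    (T B : Matrix (Fin n) (Fin n) ℝ) (hT : T.IsPrimitive')
    (hB0 : ∀ i j, 0 ≤ B i j) (hBT : ∀ i j, B i j ≤ T i j)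
    (β : ℂ) (hβ : β ∈ spectrum ℂ (B.map (Complex.ofReal)))
    (habs : ‖β‖ = specRad T) :
    T = B := by
  obtain ⟨x, hx0, hx⟩ := exists_mulVec_eq_smul_of_mem_spectrum hβ
  set y : Fin n → ℝ := fun i => ‖x i‖
  have hy0 : 0 ≤ y := fun i => norm_nonneg _
  have hy : y ≠ 0 := fun h0 => hx0 (funext fun i => norm_eq_zero.1 (congrFun h0 i))
  have hBy : specRad T • y ≤ B *ᵥ y := fun i => by
    simpa [← habs, hx, norm_mul] using norm_map_ofReal_mulVec_le hB0 x i
  have hBTy : B *ᵥ y ≤ T *ᵥ y := mulVec_le_mulVec_of_nonneg_right hBT hy0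
  have hTy := hT.mulVec_eq_specRad_smul hy0 hy (hBy.trans hBTy)
  exact (eq_of_le_of_mulVec_eq hBT (hT.pos_of_mulVec_eq_smul hy0 hy hTy)
    (le_antisymm hBTy (hTy ▸ hBy))).symm
end

section
/- For every A ∈ SL(2,ℤ) with |trace(A)| > 2, the spectral radius of A is at least (3 + √5)/2. -/
open Matrix

/-! The eigenvalues of `A` are the roots of `x ^ 2 - t * x + 1` with `t = trace A`. When `|t| ≥ 3`
one of them is real of absolute value `(|t| + √(t ^ 2 - 4)) / 2 ≥ (3 + √5) / 2`, and it bounds the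
spectral radius from below because the spectrum of a matrix is finite. -/

theorem Matrix.mem_spectrum_of_sq_sub_trace_mul_add_det {R : Type*} [CommRing R] [Nontrivial R]
    (M : Matrix (Fin 2) (Fin 2) R) {r : R} (hr : r ^ 2 - M.trace * r + M.det = 0) :
    r ∈ spectrum R M :=
  mem_spectrum_of_isRoot_charpoly (by simpa [charpoly_fin_two] using hr)

theorem Matrix.SpecialLinearGroup.mem_spectrum_map_of_sq_sub_trace_mul_add_one
    {R S : Type*} [CommRing R] [CommRing S] [Nontrivial S]
    (A : SpecialLinearGroup (Fin 2) R) (f : R →+* S) {r : S}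
    (hr : r ^ 2 - f (A : Matrix (Fin 2) (Fin 2) R).trace * r + 1 = 0) :
    r ∈ spectrum S ((A : Matrix (Fin 2) (Fin 2) R).map f) := by
  have hdet : ((A : Matrix (Fin 2) (Fin 2) R).map f).det = 1 := by
    rw [← RingHom.mapMatrix_apply, ← RingHom.map_det, A.det_coe, map_one]
  apply mem_spectrum_of_sq_sub_trace_mul_add_det
  rwa [← AddMonoidHom.map_trace, hdet]

theorem norm_le_specRad {n : ℕ} (A : Matrix (Fin n) (Fin n) ℝ) {β : ℂ}
    (hβ : β ∈ spectrum ℂ (A.map Complex.ofReal)) : ‖β‖ ≤ specRad A := by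
  refine le_csSup ?_ ⟨β, hβ, rfl⟩
  obtain ⟨C, hC⟩ :=
    ((finite_spectrum (A.map Complex.ofReal)).image fun γ : ℂ => ‖γ‖).bddAbove
  exact ⟨C, fun x ⟨γ, hγ, hx⟩ => hx ▸ hC ⟨γ, hγ, rfl⟩⟩

theorem exists_root_sq_sub_mul_add_one_abs_eq {t : ℝ} (ht : 2 ≤ |t|) :
    ∃ x : ℝ, x ^ 2 - t * x + 1 = 0 ∧ |x| = (|t| + √(t ^ 2 - 4)) / 2 := by
  have hs : √(t ^ 2 - 4) ^ 2 = t ^ 2 - 4 := Real.sq_sqrt (by nlinarith [sq_abs t])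
  have hs0 : 0 ≤ √(t ^ 2 - 4) := Real.sqrt_nonneg _
  rcases abs_cases t with ⟨hta, ht0⟩ | ⟨hta, ht0⟩
  · refine ⟨(t + √(t ^ 2 - 4)) / 2, by linear_combination hs / 4, ?_⟩
    rw [hta, abs_of_nonneg (by positivity)]
  · refine ⟨(t - √(t ^ 2 - 4)) / 2, by linear_combination hs / 4, ?_⟩
    rw [hta, abs_of_nonpos (by linarith)]
    ring

theorem minimal_dilatation_once_punctured_torus
    (A : Matrix.SpecialLinearGroup (Fin 2) ℤ)
    (hA : 2 < |Matrix.trace (A : Matrix (Fin 2) (Fin 2) ℤ)|) :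
    (3 + Real.sqrt 5) / 2 ≤
      specRad ((A : Matrix (Fin 2) (Fin 2) ℤ).map ((↑) : ℤ → ℝ)) := by
  set t := trace (A : Matrix (Fin 2) (Fin 2) ℤ)
  have ht : (3 : ℝ) ≤ |(t : ℝ)| := by exact_mod_cast hA
  obtain ⟨x, hx, hxt⟩ := exists_root_sq_sub_mul_add_one_abs_eq (t := t) (by linarith)
  have hmem : (x : ℂ) ∈ spectrum ℂ
      (((A : Matrix (Fin 2) (Fin 2) ℤ).map ((↑) : ℤ → ℝ)).map Complex.ofReal) := by
    rw [map_map]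
    refine A.mem_spectrum_map_of_sq_sub_trace_mul_add_one (Int.castRingHom ℂ) ?_
    rw [eq_intCast]
    exact_mod_cast hx
  calc (3 + √5) / 2 ≤ (|(t : ℝ)| + √((t : ℝ) ^ 2 - 4)) / 2 := by
        gcongr; nlinarith [sq_abs (t : ℝ)]
    _ = ‖(x : ℂ)‖ := by rw [Complex.norm_real, Real.norm_eq_abs, hxt]
    _ ≤ _ := norm_le_specRad _ hmem
end
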